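/- arXiv:1911.07696 — 2 statements merged into one kernel-verified Lean document; each statement's English description precedes it below -/
import Mathlib

section
/- Let H be a separable infinite-dimensional complex Hilbert space and let {e_{ij}}_{i,j∈ℕ} be a system of matrix units for B(H) (so e_{ij}* = e_{ji}, e_{ij}e_{kl} = δ_{jk} e_{il}, and the e_{ii} are orthogonal rank-one projections summing strongly to the identity). Suppose a = Σ_i α_i e_{ii} is a bounded diagonal self-adjoint operator with α_i ≠ α_j for all i ≠ j, and b ∈ B(H) is a self-adjoint operator whose matrix entries β_{i,i+1} = ⟨b e_{i+1,i+1} ξ_{i+1}, ξ_i⟩ on the first superdiagonal are all nonzero. Then the operator y = a + i b is irreducible, i.e., the only orthogonal projections p ∈ B(H) commuting with y are 0 and the identity. -/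
/-!
Being self-adjoint and commuting with `y = a + i b`, `p` also commutes with `y* = a - i b`, hence
with `a` and `b`. Commuting with a diagonal operator with distinct entries makes `p` diagonal,
`p ξⱼ = cⱼ ξⱼ`, with real `cⱼ`. Comparing the `(i, i+1)` entries of `p b = b p` gives
`cᵢ βᵢ = cᵢ₊₁ βᵢ` for `βᵢ = ⟪ξᵢ, b ξᵢ₊₁⟫ ≠ 0`, so all `cᵢ` coincide and `p` is a scalar
idempotent: `0` or `1`.
-/

open ContinuousLinearMap
open scoped InnerProductSpace

noncomputable section

def IsProjection {H : Type} [NormedAddCommGroup H] [InnerProductSpace ℂ H]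
    [CompleteSpace H] (p : H →L[ℂ] H) : Prop :=
  IsSelfAdjoint p ∧ p * p = p

open scoped ComplexConjugate

theorem Commute.of_add_I_smul {A : Type*} [Ring A] [StarRing A] [Algebra ℂ A] [StarModule ℂ A]
    {p a b : A} (hp : IsSelfAdjoint p) (ha : IsSelfAdjoint a) (hb : IsSelfAdjoint b)
    (h : Commute p (a + Complex.I • b)) : Commute p a ∧ Commute p b := by
  have h' : Commute p (a - Complex.I • b) := by
    simpa [star_smul, ha.star_eq, hb.star_eq, hp.star_eq, sub_eq_add_neg] using h.star_star
  have hpa : Commute p a := by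
    have := (h.add_right h').smul_right (2⁻¹ : ℂ)
    rwa [add_add_sub_cancel, ← two_smul ℂ, smul_smul, inv_mul_cancel₀ two_ne_zero, one_smul] at this
  refine ⟨hpa, ?_⟩
  have := (h.sub_right hpa).smul_right (-Complex.I)
  rwa [add_sub_cancel_left, smul_smul, neg_mul, Complex.I_mul_I, neg_neg, one_smul] at this

section InnerProductSpace

variable {H : Type*} [NormedAddCommGroup H] [InnerProductSpace ℂ H] {ι : Type*} {ξ : ι → H}

theorem orthonormal_of_rankOne_orthogonal {P : ι → H →L[ℂ] H} (hnorm : ∀ i, ‖ξ i‖ = 1)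
    (hP : ∀ i v, P i v = ⟪ξ i, v⟫_ℂ • ξ i) (horth : Pairwise fun i j => P i * P j = 0) :
    Orthonormal ℂ ξ := by
  refine ⟨hnorm, fun i j hij => ?_⟩
  have hj : P j (ξ j) = ξ j := by
    rw [hP, inner_self_eq_norm_sq_to_K, hnorm]; simp
  have hi : P i (ξ j) = 0 := by simpa [hj] using congr($(horth hij) (ξ j))
  rw [hP] at hi
  exact (smul_eq_zero.mp hi).resolve_right (norm_ne_zero_iff.mp (by simp [hnorm]))

theorem eq_of_forall_inner_eq (hexp : ∀ v, HasSum (fun i => ⟪ξ i, v⟫_ℂ • ξ i) v) {x y : H}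
    (h : ∀ i, ⟪ξ i, x⟫_ℂ = ⟪ξ i, y⟫_ℂ) : x = y :=
  (hexp x).unique (by simpa only [h] using hexp y)

theorem eq_inner_smul_of_inner_eq_zero (hexp : ∀ v, HasSum (fun i => ⟪ξ i, v⟫_ℂ • ξ i) v)
    {x : H} {j : ι} (h : ∀ i ≠ j, ⟪ξ i, x⟫_ℂ = 0) : x = ⟪ξ j, x⟫_ℂ • ξ j :=
  (hexp x).unique (hasSum_single j fun i hi => by rw [h i hi, zero_smul])

theorem eq_smul_one_of_apply_eq_smul (hexp : ∀ v, HasSum (fun i => ⟪ξ i, v⟫_ℂ • ξ i) v)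
    {T : H →L[ℂ] H} {c : ℂ} (h : ∀ i, T (ξ i) = c • ξ i) : T = c • 1 := by
  ext v
  refine (T.hasSum (hexp v)).unique ?_
  simpa [h, smul_comm c] using (hexp v).const_smul c

def IsDiagonal (ξ : ι → H) (α : ι → ℂ) (a : H →L[ℂ] H) : Prop :=
  ∀ v, HasSum (fun i => α i • ⟪ξ i, v⟫_ℂ • ξ i) (a v)

namespace IsDiagonal

variable {α : ι → ℂ} {a : H →L[ℂ] H}

theorem inner_apply (ha : IsDiagonal ξ α a) (hξ : Orthonormal ℂ ξ) (i : ι) (v : H) :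
    ⟪ξ i, a v⟫_ℂ = α i * ⟪ξ i, v⟫_ℂ := by
  have h := (innerSL ℂ (ξ i)).hasSum (ha v)
  rw [← innerSL_apply_apply, h.unique (hasSum_single i fun k hk => by simp [hξ.2 hk.symm])]
  simp [inner_self_eq_norm_sq_to_K, hξ.1 i]

theorem apply_basis (ha : IsDiagonal ξ α a) (hξ : Orthonormal ℂ ξ) (j : ι) :
    a (ξ j) = α j • ξ j := by
  refine (ha (ξ j)).unique ?_
  convert hasSum_single (f := fun i => α i • ⟪ξ i, ξ j⟫_ℂ • ξ i) j fun i hi => ?_ using 1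
  · rw [inner_self_eq_norm_sq_to_K, hξ.1 j]; simp
  · rw [hξ.2 hi, zero_smul, smul_zero]

theorem isSelfAdjoint [CompleteSpace H] (ha : IsDiagonal ξ α a) (hξ : Orthonormal ℂ ξ)
    (hexp : ∀ v, HasSum (fun i => ⟪ξ i, v⟫_ℂ • ξ i) v) (hα : ∀ i, conj (α i) = α i) :
    IsSelfAdjoint a := by
  rw [IsSelfAdjoint, star_eq_adjoint]
  ext v
  refine eq_of_forall_inner_eq hexp fun i => ?_
  rw [adjoint_inner_right, ha.apply_basis hξ, inner_smul_left, hα, ha.inner_apply hξ]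

theorem inner_apply_basis_eq_zero_of_commute (ha : IsDiagonal ξ α a) (hξ : Orthonormal ℂ ξ)
    {T : H →L[ℂ] H} (hT : Commute T a) {i j : ι} (hij : α i ≠ α j) : ⟪ξ i, T (ξ j)⟫_ℂ = 0 := by
  have h : ⟪ξ i, T (a (ξ j))⟫_ℂ = ⟪ξ i, a (T (ξ j))⟫_ℂ := congr(⟪ξ i, $(hT.eq) (ξ j)⟫_ℂ)
  rw [ha.apply_basis hξ, map_smul, inner_smul_right, ha.inner_apply hξ] at h
  have h' : (α i - α j) * ⟪ξ i, T (ξ j)⟫_ℂ = 0 := by rw [sub_mul, h, sub_self]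
  exact (mul_eq_zero.mp h').resolve_left (sub_ne_zero.mpr hij)

theorem apply_basis_eq_smul_of_commute (ha : IsDiagonal ξ α a) (hξ : Orthonormal ℂ ξ)
    (hexp : ∀ v, HasSum (fun i => ⟪ξ i, v⟫_ℂ • ξ i) v) (hα : Function.Injective α)
    {T : H →L[ℂ] H} (hT : Commute T a) (j : ι) : T (ξ j) = ⟪ξ j, T (ξ j)⟫_ℂ • ξ j :=
  eq_inner_smul_of_inner_eq_zero hexp fun _ hi =>
    ha.inner_apply_basis_eq_zero_of_commute hξ hT (hα.ne hi)

end IsDiagonal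

theorem conj_eq_of_commute_of_inner_ne_zero [CompleteSpace H] {p b : H →L[ℂ] H}
    (hp : IsSelfAdjoint p) (hpb : Commute p b) {x y : H} {c d : ℂ} (hx : p x = c • x)
    (hy : p y = d • y) (hxy : ⟪x, b y⟫_ℂ ≠ 0) : conj c = d := by
  have h : ⟪x, p (b y)⟫_ℂ = ⟪x, b (p y)⟫_ℂ := congr(⟪x, $(hpb.eq) y⟫_ℂ)
  have hsym : ⟪x, p (b y)⟫_ℂ = ⟪p x, b y⟫_ℂ := (hp.isSymmetric x (b y)).symm
  rw [hsym, hx, hy, inner_smul_left, map_smul, inner_smul_right] at h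
  exact mul_right_cancel₀ hxy h

end InnerProductSpace

theorem diagonal_plus_superdiagonal_irreducible_general
    {H : Type} [NormedAddCommGroup H] [InnerProductSpace ℂ H] [CompleteSpace H]
    (e : ℕ → ℕ → H →L[ℂ] H)
    (hmul : ∀ i j k l, e i j * e k l = if j = k then e i l else 0)
    (ξ : ℕ → H) (hnorm : ∀ i, ‖ξ i‖ = 1)
    (hrank1 : ∀ i (v : H), e i i v = (inner ℂ (ξ i) v : ℂ) • ξ i)
    (hsum : ∀ v : H, HasSum (fun i => e i i v) v)
    (α : ℕ → ℝ) (hα : Function.Injective α)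
    (a : H →L[ℂ] H)
    (ha : ∀ v : H, HasSum (fun i => (α i : ℂ) • e i i v) (a v))
    (b : H →L[ℂ] H) (hb : IsSelfAdjoint b)
    (hsuper : ∀ i, (inner ℂ (ξ i) (b (ξ (i + 1))) : ℂ) ≠ 0) :
    ∀ p : H →L[ℂ] H, IsProjection p →
      p * (a + Complex.I • b) = (a + Complex.I • b) * p → p = 0 ∨ p = 1 := by
  intro p ⟨hp, hp2⟩ hcomm
  have hexp : ∀ v, HasSum (fun i => ⟪ξ i, v⟫_ℂ • ξ i) v := fun v => by
    simpa only [hrank1] using hsum v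
  have hξ : Orthonormal ℂ ξ := orthonormal_of_rankOne_orthogonal (P := fun i => e i i) hnorm
    hrank1 fun i j hij => by simp [hmul, hij]
  have hdiag : IsDiagonal ξ (fun i => (α i : ℂ)) a := fun v => by simpa only [hrank1] using ha v
  obtain ⟨hpa, hpb⟩ := Commute.of_add_I_smul hp
    (hdiag.isSelfAdjoint hξ hexp fun i => Complex.conj_ofReal _) hb hcomm
  set c : ℕ → ℂ := fun j => ⟪ξ j, p (ξ j)⟫_ℂ
  have hpξ : ∀ j, p (ξ j) = c j • ξ j :=
    hdiag.apply_basis_eq_smul_of_commute hξ hexp (Complex.ofReal_injective.comp hα) hpa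
  have hc_real : ∀ j, conj (c j) = c j := fun j =>
    conj_eq_of_commute_of_inner_ne_zero hp (Commute.one_right p) (hpξ j) (hpξ j)
      (by simp [inner_self_eq_norm_sq_to_K, hnorm])
  have hc_succ : ∀ j, c (j + 1) = c j := fun j =>
    (conj_eq_of_commute_of_inner_ne_zero hp hpb (hpξ j) (hpξ (j + 1)) (hsuper j)).symm.trans
      (hc_real j)
  have hc_const : ∀ j, c j = c 0 := Nat.rec rfl fun j ih => (hc_succ j).trans ih
  have hpc : p = c 0 • 1 := eq_smul_one_of_apply_eq_smul hexp fun j => by rw [hpξ, hc_const]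
  have : Nontrivial H := ⟨⟨ξ 0, 0, norm_ne_zero_iff.mp (by simp [hnorm])⟩⟩
  have hc_idem : IsIdempotentElem (c 0) := by
    refine smul_left_injective ℂ (one_ne_zero (α := H →L[ℂ] H)) ?_
    simpa [hpc, smul_smul] using hp2
  rcases IsIdempotentElem.iff_eq_zero_or_one.mp hc_idem with h | h <;> simp [hpc, h]

/-- If `a = Σ α_i e_{ii}` is diagonal self-adjoint with pairwise distinct
diagonal entries with respect to a system of rank-one matrix units `e_{ij}` built on an
orthonormal basis `ξ`, and `b` is self-adjoint with all first-superdiagonal matrix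
entries nonzero, then `y = a + i b` is irreducible: the only orthogonal projections
commuting with `y` are `0` and `1`. -/
theorem diagonal_plus_superdiagonal_irreducible
    {H : Type} [NormedAddCommGroup H] [InnerProductSpace ℂ H] [CompleteSpace H]
    [TopologicalSpace.SeparableSpace H] (hinf : ¬ FiniteDimensional ℂ H)
    (e : ℕ → ℕ → H →L[ℂ] H)
    (hstar : ∀ i j, star (e i j) = e j i)
    (hmul : ∀ i j k l, e i j * e k l = if j = k then e i l else 0)
    (ξ : ℕ → H) (hnorm : ∀ i, ‖ξ i‖ = 1)
    (hrank1 : ∀ i (v : H), e i i v = (inner ℂ (ξ i) v : ℂ) • ξ i)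
    (hsum : ∀ v : H, HasSum (fun i => e i i v) v)
    (α : ℕ → ℝ) (hα : Function.Injective α)
    (a : H →L[ℂ] H)
    (ha : ∀ v : H, HasSum (fun i => (α i : ℂ) • e i i v) (a v))
    (b : H →L[ℂ] H) (hb : IsSelfAdjoint b)
    (hsuper : ∀ i, (inner ℂ (ξ i) (b (ξ (i + 1))) : ℂ) ≠ 0) :
    ∀ p : H →L[ℂ] H, IsProjection p →
      p * (a + Complex.I • b) = (a + Complex.I • b) * p → p = 0 ∨ p = 1 :=
  diagonal_plus_superdiagonal_irreducible_general e hmul ξ hnorm hrank1 hsum α hα a ha b hb hsuper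
end
end

section
/- Let K_Φ(M, τ) be a normed ideal of a semifinite von Neumann algebra and let K_Φ^0 denote the Φ-closure of F(M, τ). Suppose {x_n} ⊆ K_Φ^0 satisfies: (1) Σ_n x_n converges to x ∈ M in the weak* topology, and (2) Σ_n Φ(x_n) < ∞. Then x ∈ K_Φ^0 and Φ(x − Σ_{n=1}^k x_n) → 0 as k → ∞. -/
open ContinuousLinearMap Filter
open scoped InnerProductSpace Topology ENNReal

noncomputable section

namespace Stmt

variable {H : Type} [NormedAddCommGroup H] [InnerProductSpace ℂ H] [CompleteSpace H]

/-- The commutant of a set of bounded operators. -/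
def comm (S : Set (H →L[ℂ] H)) : Set (H →L[ℂ] H) := {y | ∀ x ∈ S, x * y = y * x}

/-- An orthogonal projection. -/
def IsProjection (p : H →L[ℂ] H) : Prop := IsSelfAdjoint p ∧ p * p = p

/-- `M` is a factor: its center consists of the scalars. -/
def IsFactor (M : VonNeumannAlgebra H) : Prop :=
  ∀ x ∈ M, x ∈ M.commutant → ∃ c : ℂ, x = c • (1 : H →L[ℂ] H)

/-- A unitary element of `M`. -/
def IsUnitaryIn (M : VonNeumannAlgebra H) (u : H →L[ℂ] H) : Prop :=
  u ∈ M ∧ star u * u = 1 ∧ u * star u = 1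

/-- A projection is infinite in `M` if it is Murray–von Neumann equivalent (inside `M`)
to a proper subprojection of itself. -/
def InfiniteProjIn (M : VonNeumannAlgebra H) (p : H →L[ℂ] H) : Prop :=
  ∃ v, v ∈ M ∧ star v * v = p ∧ p * v = v ∧ v * star v ≠ p

/-- `M` is properly infinite (for factors: the identity is an infinite projection). -/
def ProperlyInfinite (M : VonNeumannAlgebra H) : Prop := InfiniteProjIn M 1

/-- A projection of `M` with finite trace. -/
def FiniteTracedProj (M : VonNeumannAlgebra H) (τ : (H →L[ℂ] H) → ℝ≥0∞)
    (p : H →L[ℂ] H) : Prop :=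
  p ∈ M ∧ IsProjection p ∧ τ p < ⊤

/-- `x ∈ F(M,τ)`: the range projection of `x` has finite trace, equivalently `x` is
left-supported by a projection of finite trace. -/
def FiniteRankIn (M : VonNeumannAlgebra H) (τ : (H →L[ℂ] H) → ℝ≥0∞)
    (x : H →L[ℂ] H) : Prop :=
  x ∈ M ∧ ∃ p, FiniteTracedProj M τ p ∧ p * x = x

/-- `τ` is a faithful normal semifinite tracial weight on `M` (the properties used here). -/
structure IsTracialWeight (M : VonNeumannAlgebra H) (τ : (H →L[ℂ] H) → ℝ≥0∞) : Prop where
  tracial : ∀ x ∈ M, τ (star x * x) = τ (x * star x)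
  additive : ∀ x ∈ M, ∀ y ∈ M, ContinuousLinearMap.IsPositive x →
    ContinuousLinearMap.IsPositive y → τ (x + y) = τ x + τ y
  faithful : ∀ x ∈ M, ContinuousLinearMap.IsPositive x → τ x = 0 → x = 0
  semifinite : ∀ p ∈ M, IsProjection p → p ≠ 0 →
      ∃ q ∈ M, IsProjection q ∧ q ≠ 0 ∧ q * p = q ∧ τ q < ⊤

/-- A normed ideal `K_Φ(M,τ)` of `(M,τ)`: a two-sided ideal of `M` with a complete,
unitarily invariant, operator-norm dominating norm `Φ`, squeezed between the
finite-rank ideal `F(M,τ)` and its operator-norm closure `K(M,τ)`. -/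
structure NormedIdeal (M : VonNeumannAlgebra H) (τ : (H →L[ℂ] H) → ℝ≥0∞) where
  K : Set (H →L[ℂ] H)
  Φ : (H →L[ℂ] H) → ℝ
  subset_M : K ⊆ (M : Set (H →L[ℂ] H))
  zero_mem : (0 : H →L[ℂ] H) ∈ K
  add_mem : ∀ {x y}, x ∈ K → y ∈ K → x + y ∈ K
  smul_mem : ∀ (c : ℂ) {x}, x ∈ K → c • x ∈ K
  mul_mem_left : ∀ {a x}, a ∈ M → x ∈ K → a * x ∈ K
  mul_mem_right : ∀ {a x}, a ∈ M → x ∈ K → x * a ∈ K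
  Φ_nonneg : ∀ x, 0 ≤ Φ x
  Φ_eq_zero : ∀ x ∈ K, Φ x = 0 → x = 0
  Φ_add : ∀ x y, Φ (x + y) ≤ Φ x + Φ y
  Φ_smul : ∀ (c : ℂ) (x), Φ (c • x) = ‖c‖ * Φ x
  Φ_unitary : ∀ u v x, IsUnitaryIn M u → IsUnitaryIn M v → Φ (u * x * v) = Φ x
  dom_const : ℝ
  dom_pos : 0 < dom_const
  dominating : ∀ x ∈ K, dom_const * ‖x‖ ≤ Φ x
  finite_mem : ∀ x, FiniteRankIn M τ x → x ∈ K
  subset_closure : K ⊆ closure {x | FiniteRankIn M τ x}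
  complete : ∀ f : ℕ → H →L[ℂ] H, (∀ n, f n ∈ K) →
      (∀ ε : ℝ, 0 < ε → ∃ N, ∀ m ≥ N, ∀ n ≥ N, Φ (f m - f n) < ε) →
      ∃ x ∈ K, ∀ ε : ℝ, 0 < ε → ∃ N, ∀ n ≥ N, Φ (x - f n) < ε

/-- Membership in `K_Φ^0(M,τ)`, the `Φ`-norm closure of `F(M,τ)`. -/
def NormedIdeal.memK0 {M : VonNeumannAlgebra H} {τ : (H →L[ℂ] H) → ℝ≥0∞}
    (NI : NormedIdeal M τ) (x : H →L[ℂ] H) : Prop :=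
  x ∈ NI.K ∧ ∀ ε : ℝ, 0 < ε → ∃ y, FiniteRankIn M τ y ∧ NI.Φ (x - y) < ε

/-- `y` is irreducible in `M`: every projection of `M` commuting with `y` is trivial. -/
def IrreducibleIn (M : VonNeumannAlgebra H) (y : H →L[ℂ] H) : Prop :=
  ∀ p ∈ M, IsProjection p → p * y = y * p → p = 0 ∨ p = 1

/-- The real part of an operator. -/
def ReOp (x : H →L[ℂ] H) : H →L[ℂ] H := (2 : ℂ)⁻¹ • (x + star x)

/-- The imaginary part of an operator. -/
def ImOp (x : H →L[ℂ] H) : H →L[ℂ] H := (2 * Complex.I)⁻¹ • (x - star x)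

end Stmt

/-!
The partial sums are `Φ`-Cauchy, so by completeness they `Φ`-converge to some `y ∈ K_Φ`; as `Φ`
dominates the operator norm they also converge to `y` in norm, hence weakly, which forces `y = x`.
Since the partial sums lie in `K_Φ^0`, so does their `Φ`-limit, provided `F(M,τ)` is closed under
addition. That is Kaplansky's parallelogram law: if `v` is the polar part of `b = (1 - p₁) p₂`,
then `p₁ + v v*` is a projection above `p₁` and `p₂`, and `τ (v v*) = τ (v* v) ≤ τ p₂`. The polar
part is obtained by extending `|b| ξ ↦ b ξ` isometrically to the closure of the range of `|b|`; it
lies in `M` because it commutes with `M'`.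
-/

namespace ContinuousLinearMap

theorem eq_of_tendsto_of_tendsto_inner {𝕜 E ι : Type*} [RCLike 𝕜] [NormedAddCommGroup E]
    [InnerProductSpace 𝕜 E] {l : Filter ι} [l.NeBot] {g : ι → E →L[𝕜] E} {x y : E →L[𝕜] E}
    (hy : Tendsto g l (𝓝 y)) (hx : ∀ ξ η : E, Tendsto (fun k => ⟪η, g k ξ⟫_𝕜) l (𝓝 ⟪η, x ξ⟫_𝕜)) :
    x = y := by
  ext ξ
  refine ext_inner_left 𝕜 fun η => tendsto_nhds_unique (hx ξ η) ?_
  exact tendsto_const_nhds.inner (((apply 𝕜 E ξ).continuous.tendsto y).comp hy)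

variable {𝕜 E : Type*} [RCLike 𝕜] [NormedAddCommGroup E] [InnerProductSpace 𝕜 E] [CompleteSpace E]

noncomputable def rangeProjection (T : E →L[𝕜] E) : E →L[𝕜] E :=
  (LinearMap.range (T : E →ₗ[𝕜] E)).topologicalClosure.starProjection

variable {S T u v w₁ w₂ : E →L[𝕜] E}

theorem isStarProjection_rangeProjection (T : E →L[𝕜] E) : IsStarProjection T.rangeProjection :=
  isStarProjection_starProjection

theorem rangeProjection_mul_self (T : E →L[𝕜] E) : T.rangeProjection * T = T := by
  ext ξ
  exact Submodule.starProjection_eq_self_iff.mpr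
    ((LinearMap.range (T : E →ₗ[𝕜] E)).le_topologicalClosure (LinearMap.mem_range_self _ ξ))

theorem mul_rangeProjection_eq_of_mul_eq (h : w₁ * T = w₂ * T) :
    w₁ * T.rangeProjection = w₂ * T.rangeProjection := by
  ext ξ
  have hmem : T.rangeProjection ξ ∈ closure (Set.range T) := by
    have := Submodule.starProjection_apply_mem
      (LinearMap.range (T : E →ₗ[𝕜] E)).topologicalClosure ξ
    rwa [← SetLike.mem_coe, Submodule.topologicalClosure_coe] at this
  refine closure_minimal ?_ (isClosed_eq w₁.continuous w₂.continuous) hmem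
  rintro _ ⟨η, rfl⟩
  exact congr($h η)

theorem rangeProjection_mul_eq_zero_of_star_mul_eq_zero {Y : E →L[𝕜] E} (h : star T * Y = 0) :
    T.rangeProjection * Y = 0 := by
  have hP := (isStarProjection_rangeProjection T).isSelfAdjoint
  have : star Y * T.rangeProjection = 0 * T.rangeProjection :=
    mul_rangeProjection_eq_of_mul_eq (by simpa using congr(star $h))
  simpa [hP.star_eq] using congr(star $this)

theorem commute_rangeProjection (hu : Commute u T) (hu' : Commute (star u) T) :
    Commute u T.rangeProjection := by
  have hP := isStarProjection_rangeProjection T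
  have invariant {a : E →L[𝕜] E} (ha : Commute a T) :
      T.rangeProjection * a * T.rangeProjection = a * T.rangeProjection :=
    mul_rangeProjection_eq_of_mul_eq (by rw [mul_assoc, ha.eq, ← mul_assoc,
      rangeProjection_mul_self])
  have h' : T.rangeProjection * u * T.rangeProjection = T.rangeProjection * u := by
    simpa [mul_assoc, hP.isSelfAdjoint.star_eq] using congr(star $(invariant hu'))
  exact (invariant hu).symm.trans h'

theorem norm_apply_eq_of_star_mul_self_eq (h : star S * S = star T * T) (ξ : E) :
    ‖S ξ‖ = ‖T ξ‖ := by
  rw [apply_norm_eq_sqrt_inner_adjoint_left, apply_norm_eq_sqrt_inner_adjoint_left,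
    ← star_eq_adjoint, ← star_eq_adjoint, ← mul_def, ← mul_def, h]

/-- For `T = |S|` this is the partial isometry of the polar decomposition `S = v |S|`. -/
def IsPolarPart (v S T : E →L[𝕜] E) : Prop :=
  v * T = S ∧ v * T.rangeProjection = v

theorem exists_isPolarPart (h : star S * S = star T * T) : ∃ v, IsPolarPart v S T := by
  set N := (LinearMap.range (T : E →ₗ[𝕜] E)).topologicalClosure
  let e : E →ₗ[𝕜] N := (T : E →ₗ[𝕜] E).codRestrict N fun ξ =>
    (LinearMap.range (T : E →ₗ[𝕜] E)).le_topologicalClosure (LinearMap.mem_range_self _ ξ)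
  have he : DenseRange e := by
    rw [DenseRange, Subtype.dense_iff, ← Set.range_comp]
    exact (Submodule.topologicalClosure_coe _).subset
  have hbound : ∃ C, ∀ ξ, ‖(S : E →ₗ[𝕜] E) ξ‖ ≤ C * ‖e ξ‖ :=
    ⟨1, fun ξ => by simp [e, norm_apply_eq_of_star_mul_self_eq h]⟩
  set w := (S : E →ₗ[𝕜] E).extendOfNorm e
  refine ⟨w.comp N.orthogonalProjectionOnto, ?_, ?_⟩
  · ext ξ
    have hTξ : N.orthogonalProjectionOnto (T ξ) = e ξ :=
      Submodule.orthogonalProjectionOnto_mem_subspace_eq_self (e ξ)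
    change w (N.orthogonalProjectionOnto (T ξ)) = S ξ
    rw [hTξ, LinearMap.extendOfNorm_eq he hbound]
    rfl
  · ext ξ
    change w (N.orthogonalProjectionOnto (N.starProjection ξ)) = w (N.orthogonalProjectionOnto ξ)
    rw [Submodule.starProjection_apply, Submodule.orthogonalProjectionOnto_mem_subspace_eq_self]

namespace IsPolarPart

theorem star_mul_self (hv : IsPolarPart v S T) (h : star S * S = star T * T) :
    star v * v = T.rangeProjection := by
  have hP := isStarProjection_rangeProjection T
  set X := star v * v - T.rangeProjection
  have hXP : X * T.rangeProjection = X := by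
    rw [sub_mul, mul_assoc, hv.2, hP.isIdempotentElem.eq]
  have hPX : T.rangeProjection * X = X := by
    have hX : IsSelfAdjoint X := (IsSelfAdjoint.star_mul_self v).sub hP.isSelfAdjoint
    simpa [hX.star_eq, hP.isSelfAdjoint.star_eq] using congr(star $hXP)
  have hXT : X * T = 0 := by
    have : star T * (X * T) = 0 := by
      rw [sub_mul, mul_sub, mul_assoc, hv.1, ← mul_assoc, ← star_mul, hv.1, h,
        rangeProjection_mul_self, sub_self]
    rw [← hPX, mul_assoc, rangeProjection_mul_eq_zero_of_star_mul_eq_zero this]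
  have : X * T.rangeProjection = 0 * T.rangeProjection :=
    mul_rangeProjection_eq_of_mul_eq (by rw [hXT, zero_mul])
  have hX0 : X = 0 := by rw [← hXP, this, zero_mul]
  exact sub_eq_zero.mp hX0

theorem mul_eq_zero (hv : IsPolarPart v S T) {r : E →L[𝕜] E} (hr : r * S = 0) : r * v = 0 := by
  have : r * v * T.rangeProjection = 0 * T.rangeProjection :=
    mul_rangeProjection_eq_of_mul_eq (by rw [mul_assoc, hv.1, hr, zero_mul])
  rwa [mul_assoc, hv.2, zero_mul] at this

theorem commute (hv : IsPolarPart v S T) (huS : Commute u S) (huT : Commute u T)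
    (hu'T : Commute (star u) T) : Commute u v := by
  have huP := commute_rangeProjection huT hu'T
  have : u * v * T.rangeProjection = v * u * T.rangeProjection :=
    mul_rangeProjection_eq_of_mul_eq (by
      rw [mul_assoc, hv.1, mul_assoc, huT.eq, ← mul_assoc, hv.1, huS.eq])
  rw [Commute, SemiconjBy, ← hv.2, ← mul_assoc, this, mul_assoc, huP.eq, ← mul_assoc]

end IsPolarPart

end ContinuousLinearMap

theorem CStarRing.mul_eq_zero_of_star_mul_self_eq {R : Type*} [NonUnitalNormedRing R]
    [StarRing R] [CStarRing R] {a b x : R} (h : star a * a = star b * b) (hbx : b * x = 0) :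
    a * x = 0 := by
  rw [← CStarRing.star_mul_self_eq_zero_iff, star_mul, mul_assoc, ← mul_assoc (star a), h,
    mul_assoc, hbx, mul_zero, mul_zero]

namespace VonNeumannAlgebra

variable {H : Type*} [NormedAddCommGroup H] [InnerProductSpace ℂ H] [CompleteSpace H]
  {M : VonNeumannAlgebra H}

theorem mem_of_forall_commute {x : H →L[ℂ] H} (h : ∀ u ∈ M.commutant, Commute u x) : x ∈ M := by
  rw [← M.commutant_commutant, mem_commutant_iff]
  exact h

theorem abs_mem {b : H →L[ℂ] H} (hb : b ∈ M) : CFC.abs b ∈ M :=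
  mem_of_forall_commute fun _ hu =>
    (Commute.cfcAbs_left (mem_commutant_iff.mp hu b hb)
      (mem_commutant_iff.mp (star_mem hu) b hb)).symm

theorem exists_mem_isPolarPart_abs {b : H →L[ℂ] H} (hb : b ∈ M) :
    ∃ v ∈ M, IsPolarPart v b (CFC.abs b) ∧ star v * v = (CFC.abs b).rangeProjection := by
  have habs : star b * b = star (CFC.abs b) * CFC.abs b := by
    rw [(CFC.abs_nonneg b).isSelfAdjoint.star_eq, CFC.abs_mul_abs]
  obtain ⟨v, hv⟩ := exists_isPolarPart habs
  have hcomm {a u : H →L[ℂ] H} (ha : a ∈ M) (hu : u ∈ M.commutant) : Commute u a :=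
    (mem_commutant_iff.mp hu a ha).symm
  refine ⟨v, mem_of_forall_commute fun u hu => ?_, hv, hv.star_mul_self habs⟩
  exact hv.commute (hcomm hb hu) (hcomm (abs_mem hb) hu) (hcomm (abs_mem hb) (star_mem hu))

end VonNeumannAlgebra

namespace Stmt

variable {H : Type} [NormedAddCommGroup H] [InnerProductSpace ℂ H] [CompleteSpace H]
  {M : VonNeumannAlgebra H} {τ : (H →L[ℂ] H) → ℝ≥0∞}

theorem isProjection_iff_isStarProjection {p : H →L[ℂ] H} :
    IsProjection p ↔ IsStarProjection p :=
  ⟨fun h => ⟨h.2, h.1⟩, fun h => ⟨h.2, h.1⟩⟩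

namespace IsTracialWeight

theorem apply_add (hτ : IsTracialWeight M τ) {p q : H →L[ℂ] H} (hpM : p ∈ M) (hqM : q ∈ M)
    (hp : IsStarProjection p) (hq : IsStarProjection q) : τ (p + q) = τ p + τ q :=
  hτ.additive p hpM q hqM (.of_isStarProjection hp) (.of_isStarProjection hq)

theorem apply_le_of_mul_eq (hτ : IsTracialWeight M τ) {r s : H →L[ℂ] H} (hrM : r ∈ M)
    (hsM : s ∈ M) (hr : IsStarProjection r) (hs : IsStarProjection s) (hsr : s * r = r) :
    τ r ≤ τ s := by
  have := hτ.apply_add hrM (sub_mem hsM hrM) hr (hr.sub_of_mul_eq_right hs hsr)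
  rw [add_sub_cancel] at this
  exact this ▸ le_self_add

theorem exists_upper_projection_le_add (hτ : IsTracialWeight M τ) {p₁ p₂ : H →L[ℂ] H}
    (hp₁M : p₁ ∈ M) (hp₂M : p₂ ∈ M) (hp₁ : IsStarProjection p₁) (hp₂ : IsStarProjection p₂) :
    ∃ p ∈ M, IsStarProjection p ∧ p * p₁ = p₁ ∧ p * p₂ = p₂ ∧ τ p ≤ τ p₁ + τ p₂ := by
  set b := (1 - p₁) * p₂
  have hbM : b ∈ M := mul_mem (sub_mem (one_mem M) hp₁M) hp₂M
  obtain ⟨v, hvM, hv, hvv⟩ := VonNeumannAlgebra.exists_mem_isPolarPart_abs hbM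
  set P := (CFC.abs b).rangeProjection
  -- `P` is the right support of `b`, which lies under `p₂`
  have hp₂P : p₂ * P = P := by
    have habs := (CFC.abs_nonneg b).isSelfAdjoint
    have hAp₂ : CFC.abs b * (1 - p₂) = 0 :=
      CStarRing.mul_eq_zero_of_star_mul_self_eq (b := b) (by rw [habs.star_eq, CFC.abs_mul_abs])
        (by rw [mul_assoc, hp₂.mul_one_sub_self, mul_zero])
    rw [mul_sub, mul_one, sub_eq_zero] at hAp₂
    have hp₂A : p₂ * CFC.abs b = 1 * CFC.abs b := by
      simpa [habs.star_eq, hp₂.isSelfAdjoint.star_eq] using congr(star $hAp₂).symm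
    simpa using mul_rangeProjection_eq_of_mul_eq hp₂A
  -- `q` is the left support of `b`, orthogonal to `p₁`
  set q := v * star v
  have hqM : q ∈ M := mul_mem hvM (star_mem hvM)
  have hqv : q * v = v := by rw [mul_assoc, hvv, hv.2]
  have hq : IsStarProjection q :=
    ⟨by change q * (v * star v) = q; rw [← mul_assoc, hqv], IsSelfAdjoint.mul_star_self v⟩
  have hp₁q : p₁ * q = 0 := by
    rw [← mul_assoc, hv.mul_eq_zero (by rw [← mul_assoc, hp₁.mul_one_sub_self, zero_mul]),
      zero_mul]
  have hqp₁ : q * p₁ = 0 := by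
    simpa [hq.isSelfAdjoint.star_eq, hp₁.isSelfAdjoint.star_eq] using congr(star $hp₁q)
  have hτq : τ q ≤ τ p₂ := by
    rw [(hτ.tracial v hvM).symm, hvv]
    exact hτ.apply_le_of_mul_eq (hvv ▸ mul_mem (star_mem hvM) hvM) hp₂M
      (isStarProjection_rangeProjection _) hp₂ hp₂P
  refine ⟨p₁ + q, add_mem hp₁M hqM, hp₁.add hq hp₁q, ?_, ?_, ?_⟩
  · rw [add_mul, hp₁.isIdempotentElem.eq, hqp₁, add_zero]
  · have hsplit : p₁ * p₂ + b = p₂ := by simp [b, sub_mul]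
    have hqb : q * b = b := by rw [← hv.1, ← mul_assoc, hqv]
    conv_lhs => rw [← hsplit]
    rw [mul_add, add_mul, add_mul, ← mul_assoc, hp₁.isIdempotentElem.eq, ← mul_assoc, hqp₁,
      zero_mul, add_zero, hqb, ← mul_assoc, hp₁.mul_one_sub_self, zero_mul, zero_add, hsplit]
  · rw [hτ.apply_add hp₁M hqM hp₁ hq]
    gcongr

end IsTracialWeight

theorem FiniteRankIn.add (hτ : IsTracialWeight M τ) {y₁ y₂ : H →L[ℂ] H}
    (h₁ : FiniteRankIn M τ y₁) (h₂ : FiniteRankIn M τ y₂) : FiniteRankIn M τ (y₁ + y₂) := by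
  obtain ⟨hy₁M, p₁, ⟨hp₁M, hp₁, hp₁τ⟩, hpy₁⟩ := h₁
  obtain ⟨hy₂M, p₂, ⟨hp₂M, hp₂, hp₂τ⟩, hpy₂⟩ := h₂
  obtain ⟨p, hpM, hp, hpp₁, hpp₂, hτp⟩ := hτ.exists_upper_projection_le_add hp₁M hp₂M
    (isProjection_iff_isStarProjection.mp hp₁) (isProjection_iff_isStarProjection.mp hp₂)
  refine ⟨add_mem hy₁M hy₂M, p, ⟨hpM, isProjection_iff_isStarProjection.mpr hp,
    hτp.trans_lt (ENNReal.add_lt_top.mpr ⟨hp₁τ, hp₂τ⟩)⟩, ?_⟩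
  rw [mul_add, ← hpy₁, ← hpy₂, ← mul_assoc, hpp₁, ← mul_assoc, hpp₂]

namespace NormedIdeal

variable (NI : NormedIdeal M τ)

theorem Φ_zero : NI.Φ 0 = 0 := by
  simpa using NI.Φ_smul 0 0

theorem Φ_sub_comm (x y : H →L[ℂ] H) : NI.Φ (x - y) = NI.Φ (y - x) := by
  simpa using (NI.Φ_smul (-1) (x - y)).symm

theorem Φ_sub_le_add (x y z : H →L[ℂ] H) : NI.Φ (x - z) ≤ NI.Φ (x - y) + NI.Φ (y - z) := by
  simpa using NI.Φ_add (x - y) (y - z)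

theorem Φ_sum_le {ι : Type*} (s : Finset ι) (g : ι → H →L[ℂ] H) :
    NI.Φ (∑ i ∈ s, g i) ≤ ∑ i ∈ s, NI.Φ (g i) := by
  classical
  induction s using Finset.induction_on with
  | empty => simp [Φ_zero]
  | insert a s ha ih =>
    rw [Finset.sum_insert ha, Finset.sum_insert ha]
    exact (NI.Φ_add _ _).trans (by gcongr)

theorem sum_mem {ι : Type*} (s : Finset ι) {g : ι → H →L[ℂ] H} (hg : ∀ i ∈ s, g i ∈ NI.K) :
    ∑ i ∈ s, g i ∈ NI.K := by
  classical
  induction s using Finset.induction_on with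
  | empty => simpa using NI.zero_mem
  | insert a s ha ih =>
    rw [Finset.sum_insert ha]
    exact NI.add_mem (hg a (s.mem_insert_self a)) (ih fun i hi => hg i (s.mem_insert_of_mem hi))

theorem memK0_add (hτ : IsTracialWeight M τ) {x₁ x₂ : H →L[ℂ] H} (h₁ : NI.memK0 x₁)
    (h₂ : NI.memK0 x₂) : NI.memK0 (x₁ + x₂) := by
  refine ⟨NI.add_mem h₁.1 h₂.1, fun ε hε => ?_⟩
  obtain ⟨z₁, hz₁, hΦ₁⟩ := h₁.2 (ε / 2) (half_pos hε)
  obtain ⟨z₂, hz₂, hΦ₂⟩ := h₂.2 (ε / 2) (half_pos hε)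
  refine ⟨z₁ + z₂, hz₁.add hτ hz₂, ?_⟩
  calc NI.Φ (x₁ + x₂ - (z₁ + z₂)) = NI.Φ ((x₁ - z₁) + (x₂ - z₂)) := by rw [add_sub_add_comm]
    _ ≤ NI.Φ (x₁ - z₁) + NI.Φ (x₂ - z₂) := NI.Φ_add _ _
    _ < ε := by linarith

theorem memK0_sum (hτ : IsTracialWeight M τ) {ι : Type*} {s : Finset ι} (hs : s.Nonempty)
    {g : ι → H →L[ℂ] H} (hg : ∀ i ∈ s, NI.memK0 (g i)) : NI.memK0 (∑ i ∈ s, g i) := by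
  classical
  induction hs using Finset.Nonempty.cons_induction with
  | singleton a => simpa using hg a (Finset.mem_singleton_self a)
  | cons a s ha hs ih =>
    rw [Finset.sum_cons]
    exact NI.memK0_add hτ (hg a (Finset.mem_cons_self a s))
      (ih fun i hi => hg i (Finset.mem_cons_of_mem hi))

theorem memK0_of_tendsto {x : H →L[ℂ] H} {g : ℕ → H →L[ℂ] H} (hx : x ∈ NI.K)
    (hg : ∀ᶠ k in atTop, NI.memK0 (g k))
    (h : Tendsto (fun k => NI.Φ (x - g k)) atTop (𝓝 0)) : NI.memK0 x := by
  refine ⟨hx, fun ε hε => ?_⟩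
  obtain ⟨k, hk, hgk⟩ := ((h.eventually (gt_mem_nhds (half_pos hε))).and hg).exists
  obtain ⟨z, hz, hΦz⟩ := hgk.2 (ε / 2) (half_pos hε)
  exact ⟨z, hz, (NI.Φ_sub_le_add x (g k) z).trans_lt (by linarith)⟩

theorem Φ_sum_range_sub_le_dist (f : ℕ → H →L[ℂ] H) (m n : ℕ) :
    NI.Φ (∑ i ∈ Finset.range m, f i - ∑ i ∈ Finset.range n, f i) ≤
      dist (∑ i ∈ Finset.range m, NI.Φ (f i)) (∑ i ∈ Finset.range n, NI.Φ (f i)) := by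
  wlog hnm : n ≤ m generalizing m n
  · rw [NI.Φ_sub_comm, dist_comm]
    exact this n m (not_le.mp hnm).le
  rw [Real.dist_eq, ← Finset.sum_Ico_eq_sub _ hnm, ← Finset.sum_Ico_eq_sub _ hnm]
  exact (NI.Φ_sum_le _ _).trans (le_abs_self _)

theorem exists_tendsto_of_summable {f : ℕ → H →L[ℂ] H} (hf : ∀ n, f n ∈ NI.K)
    (hsum : Summable fun n => NI.Φ (f n)) :
    ∃ y ∈ NI.K, Tendsto (fun k => NI.Φ (y - ∑ n ∈ Finset.range k, f n)) atTop (𝓝 0) := by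
  have hcauchy := Metric.cauchySeq_iff.mp hsum.hasSum.tendsto_sum_nat.cauchySeq
  obtain ⟨y, hyK, hy⟩ := NI.complete _ (fun k => NI.sum_mem _ fun n _ => hf n) fun ε hε => by
    obtain ⟨N, hN⟩ := hcauchy ε hε
    exact ⟨N, fun m hm n hn => (NI.Φ_sum_range_sub_le_dist f m n).trans_lt (hN m hm n hn)⟩
  refine ⟨y, hyK, Metric.tendsto_atTop.mpr fun ε hε => ?_⟩
  obtain ⟨N, hN⟩ := hy ε hε
  exact ⟨N, fun n hn => by simpa [abs_of_nonneg (NI.Φ_nonneg _)] using hN n hn⟩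

theorem tendsto_of_tendsto_Φ {y : H →L[ℂ] H} {g : ℕ → H →L[ℂ] H} (hy : y ∈ NI.K)
    (hg : ∀ k, g k ∈ NI.K) (h : Tendsto (fun k => NI.Φ (y - g k)) atTop (𝓝 0)) :
    Tendsto g atTop (𝓝 y) := by
  rw [tendsto_iff_norm_sub_tendsto_zero]
  refine squeeze_zero (fun _ => norm_nonneg _) (fun k => ?_)
    (by simpa using h.div_const NI.dom_const)
  rw [norm_sub_rev, le_div_iff₀ NI.dom_pos, mul_comm]
  exact NI.dominating _ (by simpa [sub_eq_add_neg] using NI.add_mem hy (NI.smul_mem (-1) (hg k)))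

end NormedIdeal

end Stmt

open Stmt in
theorem normedIdeal_summable_general
    {H : Type} [NormedAddCommGroup H] [InnerProductSpace ℂ H] [CompleteSpace H]
    (M : VonNeumannAlgebra H) (τ : (H →L[ℂ] H) → ℝ≥0∞)
    (hτ : IsTracialWeight M τ) (NI : NormedIdeal M τ)
    (f : ℕ → H →L[ℂ] H) (hf : ∀ n, NI.memK0 (f n))
    (x : H →L[ℂ] H)
    (hweak : ∀ ξ η : H, Filter.Tendsto
      (fun k => (inner ℂ η ((∑ n ∈ Finset.range k, f n) ξ) : ℂ)) Filter.atTop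
      (nhds (inner ℂ η (x ξ))))
    (hsum : Summable (fun n => NI.Φ (f n))) :
    NI.memK0 x ∧ Filter.Tendsto
      (fun k => NI.Φ (x - ∑ n ∈ Finset.range k, f n)) Filter.atTop (nhds 0) := by
  obtain ⟨y, hyK, hy⟩ := NI.exists_tendsto_of_summable (fun n => (hf n).1) hsum
  have hSK : ∀ k, ∑ n ∈ Finset.range k, f n ∈ NI.K := fun k => NI.sum_mem _ fun n _ => (hf n).1
  obtain rfl : x = y :=
    ContinuousLinearMap.eq_of_tendsto_of_tendsto_inner (NI.tendsto_of_tendsto_Φ hyK hSK hy) hweak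
  have hS0 : ∀ᶠ k in atTop, NI.memK0 (∑ n ∈ Finset.range k, f n) :=
    eventually_atTop.mpr ⟨1, fun k hk =>
      NI.memK0_sum hτ (Finset.nonempty_range_iff.mpr (by omega)) fun n _ => hf n⟩
  exact ⟨NI.memK0_of_tendsto hyK hS0 hy, hy⟩

open Stmt in
/-- If `{x_n} ⊆ K_Φ^0` with `Σ_n x_n → x ∈ M` in the weak(*) topology
(tested against vector states) and `Σ_n Φ(x_n) < ∞`, then `x ∈ K_Φ^0` and the partial
sums converge to `x` in `Φ`-norm. -/
theorem normedIdeal_summable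
    {H : Type} [NormedAddCommGroup H] [InnerProductSpace ℂ H] [CompleteSpace H]
    (M : VonNeumannAlgebra H) (τ : (H →L[ℂ] H) → ℝ≥0∞)
    (hτ : IsTracialWeight M τ) (NI : NormedIdeal M τ)
    (f : ℕ → H →L[ℂ] H) (hf : ∀ n, NI.memK0 (f n))
    (x : H →L[ℂ] H) (hxM : x ∈ M)
    (hweak : ∀ ξ η : H, Filter.Tendsto
      (fun k => (inner ℂ η ((∑ n ∈ Finset.range k, f n) ξ) : ℂ)) Filter.atTop
      (nhds (inner ℂ η (x ξ))))
    (hsum : Summable (fun n => NI.Φ (f n))) :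
    NI.memK0 x ∧ Filter.Tendsto
      (fun k => NI.Φ (x - ∑ n ∈ Finset.range k, f n)) Filter.atTop (nhds 0) :=
  normedIdeal_summable_general M τ hτ NI f hf x hweak hsum
end
end
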